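/- Let a, b, c, p ∈ ℂ with c not a nonpositive integer. For n ∈ ℕ define v_n = ∑_{k=0}^{n} ((a)_k (b)_k / (k! · (c)_k)) · (−1)^{n−k} · (−p)_{n−k} / (n−k)! (the Maclaurin coefficients of (1+z)^p · F(a,b;c;z)). Then v_0 = 1, v_1 = ab/c + p, v_2 = (1/2)p(p−1) + p·ab/c + (1/2)·ab(a+1)(b+1)/(c(c+1)), and for every integer n ≥ 2, v_{n+1} = μ(n)·v_n/((n+1)(n+c)) + ζ(n)·v_{n−1}/((n+1)(n+c)) + σ(n)·v_{n−2}/((n+1)(n+c)), where μ(n) = −n² + (a+b−2c+2p+2)n + (ab+cp), ζ(n) = (n+2a+2b−c)(n−1) − p² − (a+b−c+2)p + 2ab, and σ(n) = (n+a−p−2)(n+b−p−2). -/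

import Mathlib

open Finset

noncomputable def poch (w : ℂ) (k : ℕ) : ℂ := (ascPochhammer ℂ k).eval w

lemma poch_zero (x : ℂ) : poch x 0 = 1 := by simp [poch]

lemma poch_succ (x : ℂ) (k : ℕ) : poch x (k + 1) = poch x k * (x + k) := by
  simp [poch, ascPochhammer_succ_right]

lemma poch_one (x : ℂ) : poch x 1 = x := by
  rw [show (1 : ℕ) = 0 + 1 from rfl, poch_succ, poch_zero]; push_cast; ring

lemma poch_two (x : ℂ) : poch x 2 = x * (x + 1) := by
  rw [show (2 : ℕ) = 1 + 1 from rfl, poch_succ, poch_one]; push_cast; ring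

lemma poch_ne (c : ℂ) (hc : ∀ k : ℕ, c + (k : ℂ) ≠ 0) : ∀ k : ℕ, poch c k ≠ 0 := by
  intro k
  induction k with
  | zero => simp [poch_zero]
  | succ k ih => rw [poch_succ]; exact mul_ne_zero ih (hc k)

noncomputable def uu (a b c : ℂ) (k : ℕ) : ℂ :=
  poch a k * poch b k / ((Nat.factorial k : ℂ) * poch c k)

noncomputable def ww (p : ℂ) (m : ℕ) : ℂ :=
  (-1 : ℂ) ^ m * poch (-p) m / (Nat.factorial m : ℂ)

noncomputable def MM (a b c p : ℂ) (j m : ℕ) : ℂ :=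
  ∑ k ∈ range (m + 1), (k : ℂ) ^ j * uu a b c k * ww p (m - k)

lemma Dw (p : ℂ) (m : ℕ) : ((m : ℂ) + 1) * ww p (m + 1) = (p - m) * ww p m := by
  rw [ww, ww, poch_succ, Nat.factorial_succ, pow_succ]
  have hf : ((Nat.factorial m : ℕ) : ℂ) ≠ 0 := Nat.cast_ne_zero.2 (Nat.factorial_ne_zero m)
  have hm : ((m : ℂ) + 1) ≠ 0 := Nat.cast_add_one_ne_zero m
  push_cast
  field_simp
  ring

lemma Du (a b c : ℂ) (hc : ∀ k : ℕ, c + (k : ℂ) ≠ 0) (k : ℕ) :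
    ((k : ℂ) + 1) * (c + k) * uu a b c (k + 1) = (a + k) * (b + k) * uu a b c k := by
  rw [uu, uu, poch_succ, poch_succ, poch_succ, Nat.factorial_succ]
  have hf : ((Nat.factorial k : ℕ) : ℂ) ≠ 0 := Nat.cast_ne_zero.2 (Nat.factorial_ne_zero k)
  have hk : ((k : ℂ) + 1) ≠ 0 := Nat.cast_add_one_ne_zero k
  have hpc := poch_ne c hc k
  have hck := hc k
  push_cast
  field_simp

lemma Wrel (a b c p : ℂ) (j m : ℕ) :
    ((m : ℂ) + 1) * MM a b c p j (m + 1) - MM a b c p (j + 1) (m + 1)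
      = (p - m) * MM a b c p j m + MM a b c p (j + 1) m := by
  simp only [MM]
  rw [Finset.mul_sum, ← Finset.sum_sub_distrib, Finset.sum_range_succ]
  have hlast : ((m : ℂ) + 1) * (((m + 1 : ℕ) : ℂ) ^ j * uu a b c (m + 1) * ww p (m + 1 - (m + 1)))
      - ((m + 1 : ℕ) : ℂ) ^ (j + 1) * uu a b c (m + 1) * ww p (m + 1 - (m + 1)) = 0 := by
    push_cast; ring
  rw [hlast, add_zero, Finset.mul_sum, ← Finset.sum_add_distrib]
  refine Finset.sum_congr rfl fun k hk => ?_
  have hk' : k ≤ m := by simpa [Nat.lt_succ_iff] using hk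
  have hdw := Dw p (m - k)
  have hc1 : ((m - k : ℕ) : ℂ) = (m : ℂ) - k := by
    push_cast [hk']; ring
  rw [show m + 1 - k = (m - k) + 1 by omega]
  rw [hc1] at hdw
  linear_combination ((k : ℂ) ^ j * uu a b c k) * hdw

lemma Urel (a b c p : ℂ) (hc : ∀ k : ℕ, c + (k : ℂ) ≠ 0) (m : ℕ) :
    (c - 1) * MM a b c p 1 (m + 1) + MM a b c p 2 (m + 1)
      = a * b * MM a b c p 0 m + (a + b) * MM a b c p 1 m + MM a b c p 2 m := by
  simp only [MM]
  rw [Finset.mul_sum, ← Finset.sum_add_distrib, Finset.sum_range_succ']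
  have h0 : (c - 1) * (((0 : ℕ) : ℂ) ^ 1 * uu a b c 0 * ww p (m + 1 - 0))
      + ((0 : ℕ) : ℂ) ^ 2 * uu a b c 0 * ww p (m + 1 - 0) = 0 := by
    norm_num
  rw [h0, add_zero, Finset.mul_sum, Finset.mul_sum, ← Finset.sum_add_distrib,
    ← Finset.sum_add_distrib]
  refine Finset.sum_congr rfl fun k hk => ?_
  rw [show m + 1 - (k + 1) = m - k by omega]
  have hdu := Du a b c hc k
  push_cast
  linear_combination (ww p (m - k)) * hdu

lemma key (a b c p : ℂ) (hc : ∀ k : ℕ, c + (k : ℂ) ≠ 0) (m : ℕ) :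
    ((m : ℂ) + 3) * ((m : ℂ) + 2 + c) * MM a b c p 0 (m + 3)
      = (-((m : ℂ) + 2) ^ 2 + (a + b - 2 * c + 2 * p + 2) * ((m : ℂ) + 2) + (a * b + c * p)) *
          MM a b c p 0 (m + 2)
      + ((((m : ℂ) + 2) + 2 * a + 2 * b - c) * (((m : ℂ) + 2) - 1) - p ^ 2 - (a + b - c + 2) * p
          + 2 * a * b) * MM a b c p 0 (m + 1)
      + ((((m : ℂ) + 2) + a - p - 2) * (((m : ℂ) + 2) + b - p - 2)) * MM a b c p 0 m := by
  have h1 := Wrel a b c p 0 (m + 2)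
  have h2 := Wrel a b c p 0 (m + 1)
  have h3 := Wrel a b c p 0 m
  have h4 := Wrel a b c p 1 (m + 2)
  have h5 := Wrel a b c p 1 m
  have h6 := Urel a b c p hc (m + 2)
  have h7 := Urel a b c p hc (m + 1)
  have h8 := Urel a b c p hc m
  rw [show m + 2 + 1 = m + 3 by omega] at h1 h4 h6
  rw [show m + 1 + 1 = m + 2 by omega] at h2 h7
  push_cast at h1 h2 h3 h4 h5 h6 h7 h8
  linear_combination ((m : ℂ) + 2 + c) * h1 + (c - a - b - p - 2) * h2
    + (p - a - b - (m : ℂ)) * h3 + h4 - h5 + h6 + 2 * h7 + h8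

theorem stmt_4 (a b c p : ℂ) (hc : ∀ k : ℕ, c + (k : ℂ) ≠ 0)
    (v : ℕ → ℂ)
    (hv : ∀ n : ℕ, v n = ∑ k ∈ range (n + 1),
      poch a k * poch b k / ((Nat.factorial k : ℂ) * poch c k) *
        ((-1 : ℂ) ^ (n - k) * poch (-p) (n - k) / (Nat.factorial (n - k) : ℂ))) :
    v 0 = 1 ∧
    v 1 = a * b / c + p ∧
    v 2 = (1 / 2) * p * (p - 1) + p * (a * b / c)
        + (1 / 2) * (a * b * (a + 1) * (b + 1) / (c * (c + 1))) ∧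
    ∀ n : ℕ, 2 ≤ n →
      v (n + 1) =
        (-(n : ℂ) ^ 2 + (a + b - 2 * c + 2 * p + 2) * n + (a * b + c * p)) * v n /
            (((n : ℂ) + 1) * (n + c))
        + ((n + 2 * a + 2 * b - c) * (n - 1) - p ^ 2 - (a + b - c + 2) * p + 2 * a * b) *
            v (n - 1) / (((n : ℂ) + 1) * (n + c))
        + ((n + a - p - 2) * (n + b - p - 2)) * v (n - 2) / (((n : ℂ) + 1) * (n + c)) := by
  have hc0 : c ≠ 0 := by simpa using hc 0
  have hc1 : c + 1 ≠ 0 := by simpa using hc 1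
  have hvM : ∀ n, v n = MM a b c p 0 n := by
    intro n
    rw [hv n]
    simp only [MM]
    refine Finset.sum_congr rfl fun k _ => ?_
    simp only [uu, ww, pow_zero, one_mul]
  refine ⟨?_, ?_, ?_, ?_⟩
  · norm_num [hv, Finset.sum_range_one, poch_zero]
  · rw [hv]
    norm_num [Finset.sum_range_succ, Finset.sum_range_one, poch_zero, poch_one, Nat.factorial]
    ring
  · rw [hv]
    norm_num [Finset.sum_range_succ, Finset.sum_range_one, poch_zero, poch_one, poch_two,
      Nat.factorial]
    field_simp
    ring
  · intro n hn
    obtain ⟨m, rfl⟩ : ∃ m, n = m + 2 := ⟨n - 2, by omega⟩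
    rw [show m + 2 + 1 = m + 3 by omega, show m + 2 - 1 = m + 1 by omega,
      show m + 2 - 2 = m by omega]
    simp only [hvM]
    have hk := key a b c p hc m
    have hne1 : (m : ℂ) + 2 + 1 ≠ 0 := by
      have h : ((m + 3 : ℕ) : ℂ) ≠ 0 := Nat.cast_ne_zero.mpr (by omega)
      push_cast at h
      intro h'; exact h (by linear_combination h')
    have hne2 : (m : ℂ) + 2 + c ≠ 0 := by
      have h := hc (m + 2)
      push_cast at h
      intro h'; exact h (by linear_combination h')
    push_cast
    field_simp
    linear_combination hk
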